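/- If time t is an i-node of order m−t for x_{1:m} (with 1 ≤ t < m), then for every n ≥ m and every continuation x_{m+1:n} of the observations there exists a Viterbi path v of x_{1:n} (a maximizer of y_{1:n} ↦ p(x_{1:n},y_{1:n})) with v_t = i. -/
import Mathlib


open scoped BigOperators

namespace PMMViterbi

variable {𝒳 𝒴 : Type*} [Fintype 𝒴] [Nonempty 𝒴]

/-- Product of transition weights `∏_{k=t+1}^{n} q(x_k, y_k | x_{k-1}, y_{k-1})`
along the path `y`, for observations `x` (sequences are indexed starting from 1). -/
noncomputable def prodQ (q : 𝒳 × 𝒴 → 𝒳 × 𝒴 → ℝ) (x : ℕ → 𝒳) (y : ℕ → 𝒴) (t n : ℕ) : ℝ :=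
  ∏ k ∈ Finset.Ioc t n, q (x k, y k) (x (k - 1), y (k - 1))

/-- `p(x_{1:n}, y_{1:n}) = p₁(x₁,y₁) · ∏_{k=2}^n q(x_k,y_k|x_{k-1},y_{k-1})`. -/
noncomputable def pJoint (q : 𝒳 × 𝒴 → 𝒳 × 𝒴 → ℝ) (p1 : 𝒳 × 𝒴 → ℝ)
    (x : ℕ → 𝒳) (y : ℕ → 𝒴) (n : ℕ) : ℝ :=
  p1 (x 1, y 1) * prodQ q x y 1 n

/-- `δ_t(i)`: the maximum of `p(x_{1:t}, y_{1:t})` over paths with `y_t = i`. -/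
noncomputable def delta (q : 𝒳 × 𝒴 → 𝒳 × 𝒴 → ℝ) (p1 : 𝒳 × 𝒴 → ℝ)
    (x : ℕ → 𝒳) (t : ℕ) (i : 𝒴) : ℝ :=
  ⨆ (y : ℕ → 𝒴) (_ : y t = i), pJoint q p1 x y t

/-- `p_{ij}(x_{t:n})`: the maximum of `∏_{k=t+1}^n q(x_k,y_k|x_{k-1},y_{k-1})`
over paths with `y_t = i` and `y_n = j`. -/
noncomputable def pTrans (q : 𝒳 × 𝒴 → 𝒳 × 𝒴 → ℝ) (x : ℕ → 𝒳) (t n : ℕ) (i j : 𝒴) : ℝ :=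
  ⨆ (y : ℕ → 𝒴) (_ : y t = i ∧ y n = j), prodQ q x y t n

/-- Time `t` is an `i`-node of order `m - t` for `x_{1:m}`. -/
def IsNode (q : 𝒳 × 𝒴 → 𝒳 × 𝒴 → ℝ) (p1 : 𝒳 × 𝒴 → ℝ)
    (x : ℕ → 𝒳) (t m : ℕ) (i : 𝒴) : Prop :=
  ∀ j k : 𝒴, delta q p1 x t k * pTrans q x t m k j ≤ delta q p1 x t i * pTrans q x t m i j

/-- Time `t` is a strong `i`-node of order `m - t` for `x_{1:m}`. -/
def IsStrongNode (q : 𝒳 × 𝒴 → 𝒳 × 𝒴 → ℝ) (p1 : 𝒳 × 𝒴 → ℝ)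
    (x : ℕ → 𝒳) (t m : ℕ) (i : 𝒴) : Prop :=
  IsNode q p1 x t m i ∧
    ∀ j k : 𝒴, k ≠ i → 0 < delta q p1 x t i * pTrans q x t m i j →
      delta q p1 x t k * pTrans q x t m k j < delta q p1 x t i * pTrans q x t m i j

/-- `v` is a Viterbi path of `x_{1:n}`: it maximizes `y ↦ p(x_{1:n}, y_{1:n})`. -/
def IsViterbi (q : 𝒳 × 𝒴 → 𝒳 × 𝒴 → ℝ) (p1 : 𝒳 × 𝒴 → ℝ)
    (x : ℕ → 𝒳) (n : ℕ) (v : ℕ → 𝒴) : Prop :=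
  ∀ y : ℕ → 𝒴, pJoint q p1 x y n ≤ pJoint q p1 x v n

/-- `v` is an infinite Viterbi path of `x_{1:∞}`: for every `t ≥ 1` there is `m ≥ t`
such that for every `n ≥ m` some Viterbi path of `x_{1:n}` agrees with `v`
on coordinates `1, …, t`. -/
def IsInfViterbi (q : 𝒳 × 𝒴 → 𝒳 × 𝒴 → ℝ) (p1 : 𝒳 × 𝒴 → ℝ)
    (x : ℕ → 𝒳) (v : ℕ → 𝒴) : Prop :=
  ∀ t : ℕ, 1 ≤ t → ∃ m : ℕ, t ≤ m ∧ ∀ n : ℕ, m ≤ n →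
    ∃ w : ℕ → 𝒴, IsViterbi q p1 x n w ∧ ∀ s : ℕ, 1 ≤ s → s ≤ t → w s = v s

section Aux

variable (q : 𝒳 × 𝒴 → 𝒳 × 𝒴 → ℝ) (p1 : 𝒳 × 𝒴 → ℝ)

lemma prodQ_nonneg (hq : ∀ z z' : 𝒳 × 𝒴, 0 ≤ q z z') (x : ℕ → 𝒳) (y : ℕ → 𝒴) (t n : ℕ) :
    0 ≤ prodQ q x y t n :=
  Finset.prod_nonneg fun _ _ => hq _ _

lemma pJoint_nonneg (hq : ∀ z z' : 𝒳 × 𝒴, 0 ≤ q z z') (hp1 : ∀ z : 𝒳 × 𝒴, 0 ≤ p1 z)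
    (x : ℕ → 𝒳) (y : ℕ → 𝒴) (n : ℕ) : 0 ≤ pJoint q p1 x y n :=
  mul_nonneg (hp1 _) (prodQ_nonneg q hq x y 1 n)

lemma prodQ_congr {x x' : ℕ → 𝒳} {y y' : ℕ → 𝒴} {t n : ℕ}
    (hx : ∀ k, t ≤ k → k ≤ n → x k = x' k) (hy : ∀ k, t ≤ k → k ≤ n → y k = y' k) :
    prodQ q x y t n = prodQ q x' y' t n := by
  refine Finset.prod_congr rfl fun k hk => ?_
  rw [Finset.mem_Ioc] at hk
  have h1 : t ≤ k - 1 := Nat.le_pred_of_lt hk.1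
  have h2 : k - 1 ≤ n := le_trans (Nat.sub_le _ _) hk.2
  rw [hx k hk.1.le hk.2, hy k hk.1.le hk.2, hx _ h1 h2, hy _ h1 h2]

lemma pJoint_congr {x x' : ℕ → 𝒳} {y y' : ℕ → 𝒴} {t : ℕ} (ht : 1 ≤ t)
    (hx : ∀ k, 1 ≤ k → k ≤ t → x k = x' k) (hy : ∀ k, 1 ≤ k → k ≤ t → y k = y' k) :
    pJoint q p1 x y t = pJoint q p1 x' y' t := by
  unfold pJoint
  rw [hx 1 le_rfl ht, hy 1 le_rfl ht, prodQ_congr q hx hy]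

lemma pJoint_split (x : ℕ → 𝒳) (y : ℕ → 𝒴) {t n : ℕ} (ht : 1 ≤ t) (htn : t ≤ n) :
    pJoint q p1 x y n = pJoint q p1 x y t * prodQ q x y t n := by
  unfold pJoint prodQ
  rw [← Finset.prod_Ioc_consecutive _ ht htn, mul_assoc]

lemma range_finite_of_depends {f : (ℕ → 𝒴) → ℝ} {N : ℕ}
    (hf : ∀ y y' : ℕ → 𝒴, (∀ k, k ≤ N → y k = y' k) → f y = f y') :
    (Set.range f).Finite := by
  classical
  have hsub : Set.range f ⊆ Set.range
      (fun h : Fin (N + 1) → 𝒴 =>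
        f fun k => if hk : k < N + 1 then h ⟨k, hk⟩ else Classical.arbitrary 𝒴) := by
    rintro _ ⟨y, rfl⟩
    refine ⟨fun k => y k, ?_⟩
    exact hf _ _ fun k hk => by simp [Nat.lt_succ_of_le hk]
  exact (Set.finite_range _).subset hsub

lemma exists_argmax {f : (ℕ → 𝒴) → ℝ} {N : ℕ}
    (hf : ∀ y y' : ℕ → 𝒴, (∀ k, k ≤ N → y k = y' k) → f y = f y') :
    ∃ y : ℕ → 𝒴, ∀ y', f y' ≤ f y := by
  have hfin := range_finite_of_depends (𝒴 := 𝒴) hf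
  obtain ⟨y, hy⟩ := (Set.range_nonempty f).csSup_mem hfin
  exact ⟨y, fun y' => hy ▸ le_csSup hfin.bddAbove ⟨y', rfl⟩⟩

lemma csSup_prop {f : (ℕ → 𝒴) → ℝ} {P : (ℕ → 𝒴) → Prop} {N : ℕ}
    (hf : ∀ y y' : ℕ → 𝒴, (∀ k, k ≤ N → y k = y' k) → f y = f y')
    (hnn : ∀ y, 0 ≤ f y) {y0 : ℕ → 𝒴} (hy0 : P y0) :
    (∃ y, P y ∧ f y = ⨆ y, ⨆ (_ : P y), f y) ∧
      ∀ y, P y → f y ≤ ⨆ y, ⨆ (_ : P y), f y := by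
  classical
  set g : (ℕ → 𝒴) → ℝ := fun y => ⨆ (_ : P y), f y with hg
  have hgval : ∀ y, P y → g y = f y := fun y hy => ciSup_pos hy
  have hgval' : ∀ y, ¬ P y → g y = 0 := fun y hy => by
    haveI : IsEmpty (P y) := ⟨hy⟩
    exact Real.iSup_of_isEmpty _
  have hsub : Set.range g ⊆ insert 0 (Set.range f) := by
    rintro _ ⟨y, rfl⟩
    by_cases hy : P y
    · exact Set.mem_insert_iff.mpr (Or.inr ⟨y, (hgval y hy).symm⟩)
    · exact Set.mem_insert_iff.mpr (Or.inl (hgval' y hy))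
  have hfin : (Set.range g).Finite :=
    ((range_finite_of_depends (𝒴 := 𝒴) hf).insert 0).subset hsub
  have hbdd : BddAbove (Set.range g) := hfin.bddAbove
  have hiSup : (⨆ y, g y) = sSup (Set.range g) := rfl
  have hle : ∀ y, P y → f y ≤ ⨆ y, g y := fun y hy =>
    (hgval y hy) ▸ le_ciSup hbdd y
  obtain ⟨y, hy⟩ := (Set.range_nonempty g).csSup_mem hfin
  refine ⟨?_, hle⟩
  by_cases hPy : P y
  · exact ⟨y, hPy, ((hgval y hPy).symm.trans hy).trans hiSup.symm⟩
  · refine ⟨y0, hy0, le_antisymm (hle y0 hy0) ?_⟩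
    have h0 : (⨆ y, g y) = 0 := by rw [hiSup, ← hy, hgval' y hPy]
    rw [h0]
    exact hnn y0

lemma delta_spec (hq : ∀ z z' : 𝒳 × 𝒴, 0 ≤ q z z') (hp1 : ∀ z : 𝒳 × 𝒴, 0 ≤ p1 z)
    (x : ℕ → 𝒳) {t : ℕ} (ht : 1 ≤ t) (i : 𝒴) :
    (∃ y : ℕ → 𝒴, y t = i ∧ pJoint q p1 x y t = delta q p1 x t i) ∧
      ∀ y : ℕ → 𝒴, pJoint q p1 x y t ≤ delta q p1 x t (y t) := by
  have hf : ∀ y y' : ℕ → 𝒴, (∀ k, k ≤ t → y k = y' k) →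
      pJoint q p1 x y t = pJoint q p1 x y' t := fun y y' h =>
    pJoint_congr q p1 ht (fun _ _ _ => rfl) (fun k _ hk2 => h k hk2)
  constructor
  · obtain ⟨⟨y, hy, hval⟩, -⟩ := csSup_prop (P := fun y : ℕ → 𝒴 => y t = i) hf
      (fun y => pJoint_nonneg q p1 hq hp1 x y t) (y0 := fun _ => i) rfl
    exact ⟨y, hy, hval⟩
  · intro y
    obtain ⟨-, hle⟩ := csSup_prop (P := fun z : ℕ → 𝒴 => z t = y t) hf
      (fun y => pJoint_nonneg q p1 hq hp1 x y t) (y0 := y) rfl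
    exact hle y rfl

lemma pTrans_spec (hq : ∀ z z' : 𝒳 × 𝒴, 0 ≤ q z z')
    (x : ℕ → 𝒳) {t m : ℕ} (htm : t < m) (i j : 𝒴) :
    (∃ y : ℕ → 𝒴, (y t = i ∧ y m = j) ∧ prodQ q x y t m = pTrans q x t m i j) ∧
      ∀ y : ℕ → 𝒴, y m = j → prodQ q x y t m ≤ pTrans q x t m (y t) j := by
  classical
  have hf : ∀ y y' : ℕ → 𝒴, (∀ k, k ≤ m → y k = y' k) →
      prodQ q x y t m = prodQ q x y' t m := fun y y' h =>
    prodQ_congr q (fun _ _ _ => rfl) (fun k _ hk2 => h k hk2)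
  constructor
  · have hy0 : (fun k => if k ≤ t then i else j) t = i ∧
        (fun k => if k ≤ t then i else j) m = j := by
      constructor
      · simp
      · simp [Nat.not_le.mpr htm]
    obtain ⟨⟨y, hy, hval⟩, -⟩ := csSup_prop (P := fun y : ℕ → 𝒴 => y t = i ∧ y m = j) hf
      (fun y => prodQ_nonneg q hq x y t m) (y0 := fun k => if k ≤ t then i else j) hy0
    exact ⟨y, hy, hval⟩
  · intro y hym
    obtain ⟨-, hle⟩ := csSup_prop (P := fun z : ℕ → 𝒴 => z t = y t ∧ z m = j) hf
      (fun y => prodQ_nonneg q hq x y t m) (y0 := y) ⟨rfl, hym⟩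
    exact hle y ⟨rfl, hym⟩

end Aux

/-- if `t` is an `i`-node of order `m - t` for `x_{1:m}`, then for every
`n ≥ m` and every continuation `x'` of `x_{1:m}` there is a Viterbi path `v` of
`x'_{1:n}` with `v_t = i`. -/
theorem exists_viterbi_through_node (q : 𝒳 × 𝒴 → 𝒳 × 𝒴 → ℝ) (p1 : 𝒳 × 𝒴 → ℝ)
    (hq : ∀ z z' : 𝒳 × 𝒴, 0 ≤ q z z') (hp1 : ∀ z : 𝒳 × 𝒴, 0 ≤ p1 z)
    (x : ℕ → 𝒳) (t m : ℕ) (ht : 1 ≤ t) (htm : t < m) (i : 𝒴)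
    (hnode : IsNode q p1 x t m i) :
    ∀ x' : ℕ → 𝒳, (∀ k : ℕ, k ≤ m → x' k = x k) → ∀ n : ℕ, m ≤ n →
      ∃ v : ℕ → 𝒴, IsViterbi q p1 x' n v ∧ v t = i := by
  intro x' hx' n hn
  classical
  have htm' : t ≤ m := le_of_lt htm
  have htn : t ≤ n := htm'.trans hn
  have h1n : 1 ≤ n := ht.trans htn
  have h1m : 1 ≤ m := ht.trans htm'
  obtain ⟨w, hw⟩ := exists_argmax (N := n) (f := fun y => pJoint q p1 x' y n)
      (fun y y' h => pJoint_congr q p1 h1n (fun _ _ _ => rfl) (fun k _ hk2 => h k hk2))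
  obtain ⟨⟨y1, hy1t, hy1⟩, -⟩ := delta_spec q p1 hq hp1 x ht i
  have hdle := (delta_spec q p1 hq hp1 x ht (w t)).2 w
  obtain ⟨⟨y2, ⟨hy2t, hy2m⟩, hy2⟩, hple⟩ := pTrans_spec q hq x htm i (w m)
  have hpleW := (pTrans_spec q hq x htm (w t) (w m)).2 w rfl
  set v : ℕ → 𝒴 := fun k => if k ≤ t then y1 k else if k ≤ m then y2 k else w k with hv
  have hvt : v t = i := by simp [hv, hy1t]
  have e1 : pJoint q p1 x' v t = pJoint q p1 x y1 t :=
    pJoint_congr q p1 ht (fun k _ hk => hx' k (hk.trans htm'))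
      (fun k _ hk => by simp [hv, hk])
  have e2 : prodQ q x' v t m = prodQ q x y2 t m := by
    refine prodQ_congr q (fun k _ hk2 => hx' k hk2) (fun k hk1 hk2 => ?_)
    by_cases hkt : k ≤ t
    · have hk : k = t := le_antisymm hkt hk1
      subst hk
      simp only [hv, if_pos le_rfl]
      rw [hy1t, hy2t]
    · simp [hv, hkt, hk2]
  have e3 : prodQ q x' v m n = prodQ q x' w m n := by
    refine prodQ_congr q (fun _ _ _ => rfl) (fun k hk1 hk2 => ?_)
    have hkt : ¬ k ≤ t := Nat.not_le.mpr (lt_of_lt_of_le htm hk1)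
    by_cases hkm : k ≤ m
    · have hk : k = m := le_antisymm hkm hk1
      subst hk
      simp only [hv, if_neg hkt, if_pos le_rfl]
      rw [hy2m]
    · simp [hv, hkt, hkm]
  have dsplit : ∀ y : ℕ → 𝒴, pJoint q p1 x' y n =
      pJoint q p1 x' y t * prodQ q x' y t m * prodQ q x' y m n := fun y => by
    rw [pJoint_split q p1 x' y h1m hn, pJoint_split q p1 x' y ht htm']
  have hxw_t : pJoint q p1 x' w t = pJoint q p1 x w t :=
    pJoint_congr q p1 ht (fun k _ hk => hx' k (hk.trans htm')) (fun _ _ _ => rfl)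
  have hxw_tm : prodQ q x' w t m = prodQ q x w t m :=
    prodQ_congr q (fun k _ hk2 => hx' k hk2) (fun _ _ _ => rfl)
  have hnn_c : 0 ≤ prodQ q x' w m n := prodQ_nonneg q hq x' w m n
  have hnnd : 0 ≤ delta q p1 x t (w t) :=
    le_trans (pJoint_nonneg q p1 hq hp1 x w t) hdle
  have key : pJoint q p1 x' w n ≤ pJoint q p1 x' v n := by
    rw [dsplit w, dsplit v, e1, e2, e3, hy1, hy2, hxw_t, hxw_tm]
    refine mul_le_mul_of_nonneg_right ?_ hnn_c
    calc pJoint q p1 x w t * prodQ q x w t m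
        ≤ delta q p1 x t (w t) * pTrans q x t m (w t) (w m) :=
          mul_le_mul hdle hpleW (prodQ_nonneg q hq x w t m) hnnd
      _ ≤ delta q p1 x t i * pTrans q x t m i (w m) := hnode (w m) (w t)
  exact ⟨v, fun y => (hw y).trans key, hvt⟩

end PMMViterbi
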